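/- arXiv:2105.05055 — 6 statements merged into one kernel-verified Lean document; each statement's English description precedes it below -/
import Mathlib

section
/- For 2x2 positive semidefinite matrices A and B, the Uhlmann fidelity satisfies Tr(sqrt(sqrt(A) B sqrt(A))) = sqrt(Tr(AB) + 2 sqrt(det(A) det(B))). -/
/-!
Cayley–Hamilton for a `2 × 2` matrix gives `(tr S)² = tr (S²) + 2 det S`. Take `S = √(√A B √A)`:
`S² = √A B √A` has trace `tr (A B)` and determinant `det A det B`, and since `S ⪰ 0` both
`tr S` and `det S = √(det S²)` are nonnegative, so `tr S` is the square root of the right side.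
-/

open Matrix

/-- The positive semidefinite square root of a matrix (zero if not PSD). -/
noncomputable def psdSqrt {d : ℕ} (A : Matrix (Fin d) (Fin d) ℝ) : Matrix (Fin d) (Fin d) ℝ :=
  @dite _ A.PosSemidef (Classical.dec _) (fun h => h.1.eigenvectorUnitary.1 * diagonal ((↑) ∘ (√·) ∘ h.1.eigenvalues) *
    (star h.1.eigenvectorUnitary : Matrix (Fin d) (Fin d) ℝ)) (fun _ => 0)

open scoped MatrixOrder

theorem psdSqrt_eq_cfcSqrt {d : ℕ} {A : Matrix (Fin d) (Fin d) ℝ} (hA : A.PosSemidef) :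
    psdSqrt A = CFC.sqrt A := by
  rw [CFC.sqrt_eq_cfc, cfc_nnreal_eq_real _ A, hA.1.cfc_eq, psdSqrt, dif_pos hA]
  simp [IsHermitian.cfc, Function.comp_def, max_eq_left (hA.eigenvalues_nonneg _)]

theorem Matrix.trace_sq_fin_two {R : Type*} [CommRing R] (S : Matrix (Fin 2) (Fin 2) R) :
    S.trace ^ 2 = (S * S).trace + 2 * S.det := by
  simp only [trace_fin_two, det_fin_two, mul_apply, Fin.sum_univ_two]
  ring

theorem Matrix.PosSemidef.trace_eq_sqrt_fin_two {S : Matrix (Fin 2) (Fin 2) ℝ} (hS : S.PosSemidef) :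
    S.trace = √((S * S).trace + 2 * √(S * S).det) := by
  rw [det_mul, Real.sqrt_mul_self hS.det_nonneg, ← trace_sq_fin_two, Real.sqrt_sq hS.trace_nonneg]

/-- For 2×2 positive semidefinite (real symmetric) matrices `A`, `B`, the Uhlmann fidelity
satisfies `Tr √(√A B √A) = √(Tr(AB) + 2 √(det A · det B))`. -/
theorem uhlmann_fidelity_two_by_two (A B : Matrix (Fin 2) (Fin 2) ℝ)
    (hA : A.PosSemidef) (hB : B.PosSemidef) :
    (psdSqrt (psdSqrt A * B * psdSqrt A)).trace =
      Real.sqrt ((A * B).trace + 2 * Real.sqrt (A.det * B.det)) := by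
  set R := CFC.sqrt A
  have hRR : R * R = A := CFC.sqrt_mul_sqrt_self A (nonneg_iff_posSemidef.2 hA)
  have hM : 0 ≤ R * B * R :=
    conjugate_nonneg_of_nonneg (nonneg_iff_posSemidef.2 hB) (CFC.sqrt_nonneg A)
  have htrace : (R * B * R).trace = (A * B).trace := by rw [trace_mul_cycle, hRR]
  have hdet : (R * B * R).det = A.det * B.det := by
    rw [det_mul, det_mul, mul_right_comm, ← det_mul, hRR]
  rw [psdSqrt_eq_cfcSqrt hA, psdSqrt_eq_cfcSqrt (nonneg_iff_posSemidef.1 hM),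
    (nonneg_iff_posSemidef.1 (CFC.sqrt_nonneg _)).trace_eq_sqrt_fin_two,
    CFC.sqrt_mul_sqrt_self _ hM, htrace, hdet]
end

section
/- For a finite-dimensional Hermitian matrix H with partition function Z(β) = Tr(e^{-βH}), the function β ↦ Z((β+β')/2)/sqrt(Z(β)Z(β')) evaluated with β' = β + δ satisfies: the negative of 2 times the second-order coefficient of ln F in δ equals Var_ρ(H)/4, where Var_ρ(H) is the variance of H in the Gibbs state at inverse temperature β. Equivalently, the thermal fidelity susceptibility ξ(β) := -2 lim_{δ→0} ln F(β-δ/2, β+δ/2)/δ² equals C_v(β)/(4β²) with C_v(β) = β² Var_ρ(H). -/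
/-!
Because the Gibbs states commute, `-2 log F(β - δ/2, β + δ/2)` is the symmetric second difference
`log Z(β + δ/2) + log Z(β - δ/2) - 2 log Z(β)`, so after division by `δ²` it tends to
`(log Z)''(β) / 4`. Differentiating `Z(b) = tr e^{-bH}` under the trace gives
`Z' = -tr(e^{-bH} H)` and `Z'' = tr(e^{-bH} H²)`, hence `(log Z)'' = Z''/Z - (Z'/Z)²` is the
variance of `H` in the Gibbs state.
-/

open Matrix Filter Topology

theorem tendsto_const_mul_nhdsNE_zero {c : ℝ} (hc : c ≠ 0) :
    Tendsto (fun t => c * t) (𝓝[≠] 0) (𝓝[≠] 0) :=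
  tendsto_nhdsWithin_of_tendsto_nhds_of_eventually_within _
    ((continuous_const_mul c).tendsto' 0 0 (mul_zero c) |>.mono_left nhdsWithin_le_nhds)
    (eventually_mem_nhdsWithin.mono fun _ ht => mul_ne_zero hc ht)

theorem tendsto_symmetric_second_difference {f f' : ℝ → ℝ} {x f'' : ℝ}
    (hf : ∀ᶠ y in 𝓝 x, HasDerivAt f (f' y) y) (hf' : HasDerivAt f' f'' x) :
    Tendsto (fun h => (f (x + h) + f (x - h) - 2 * f x) / h ^ 2) (𝓝[≠] 0) (𝓝 f'') := by
  have hnum : ∀ᶠ h in 𝓝 (0 : ℝ), HasDerivAt (fun h => f (x + h) + f (x - h) - 2 * f x)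
      (f' (x + h) - f' (x - h)) h := by
    filter_upwards [((continuous_const_add x).tendsto' 0 x (add_zero x)).eventually hf,
      ((continuous_sub_left x).tendsto' 0 x (sub_zero x)).eventually hf] with h hadd hsub
    simpa [sub_eq_add_neg] using
      ((hadd.comp_const_add x h).add (hsub.comp_const_sub x h)).sub_const (2 * f x)
  -- the quotient of derivatives is the mean of the right and left slopes of `f'` at `x`
  have hquot : Tendsto (fun h => (f' (x + h) - f' (x - h)) / (2 * h)) (𝓝[≠] 0) (𝓝 f'') := by
    have hright := hf'.tendsto_slope_zero
    have hleft := hright.comp (tendsto_const_mul_nhdsNE_zero (neg_ne_zero.2 one_ne_zero))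
    rw [show f'' = (f'' + f'') / 2 by ring]
    refine ((hright.add hleft).div_const 2).congr' ?_
    filter_upwards [self_mem_nhdsWithin] with h (hh : h ≠ 0)
    simp only [Function.comp, smul_eq_mul]
    field_simp
    ring_nf
  refine HasDerivAt.lhopital_zero_nhdsNE (hnum.filter_mono nhdsWithin_le_nhds)
    (.of_forall fun h => hasDerivAt_pow 2 h) ?_ ?_ ?_ ?_
  · filter_upwards [self_mem_nhdsWithin] with h (hh : h ≠ 0)
    simpa using hh
  · simpa [← two_mul] using hnum.self_of_nhds.continuousAt.tendsto.mono_left nhdsWithin_le_nhds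
  · simpa using ((continuous_pow 2).tendsto' (0 : ℝ) 0 (by norm_num)).mono_left nhdsWithin_le_nhds
  · simpa [mul_comm] using hquot

theorem neg_two_mul_log_fidelity {Z : ℝ → ℝ} (hZ : ∀ b, 0 < Z b) (β₁ β₂ : ℝ) :
    -2 * Real.log (Z ((β₁ + β₂) / 2) / √(Z β₁ * Z β₂)) =
      Real.log (Z β₁) + Real.log (Z β₂) - 2 * Real.log (Z ((β₁ + β₂) / 2)) := by
  rw [Real.log_div (hZ _).ne' (Real.sqrt_pos.2 (mul_pos (hZ β₁) (hZ β₂))).ne',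
    Real.log_sqrt (mul_pos (hZ β₁) (hZ β₂)).le, Real.log_mul (hZ β₁).ne' (hZ β₂).ne']
  ring

theorem tendsto_neg_two_log_fidelity_div_sq {Z Z' : ℝ → ℝ} {β Z'' : ℝ} (hpos : ∀ b, 0 < Z b)
    (hZ : ∀ b, HasDerivAt Z (Z' b) b) (hZ' : HasDerivAt Z' Z'' β) :
    Tendsto (fun δ => -2 * Real.log (Z ((β - δ / 2 + (β + δ / 2)) / 2) /
        √(Z (β - δ / 2) * Z (β + δ / 2))) / δ ^ 2)
      (𝓝[≠] 0) (𝓝 ((Z'' / Z β - (Z' β / Z β) ^ 2) / 4)) := by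
  have hlogZ' : HasDerivAt (fun b => Z' b / Z b) ((Z'' * Z β - Z' β * Z' β) / Z β ^ 2) β :=
    hZ'.div (hZ β) (hpos β).ne'
  have hsecond := tendsto_symmetric_second_difference
    (.of_forall fun b => (hZ b).log (hpos b).ne') hlogZ'
  have hhalf := hsecond.comp (tendsto_const_mul_nhdsNE_zero (one_div_ne_zero two_ne_zero))
  convert hhalf.div_const 4 using 2 with δ
  · simp only [neg_two_mul_log_fidelity hpos, Function.comp]
    ring_nf
  · field_simp [(hpos β).ne']

namespace Matrix

open scoped ComplexOrder

variable {n 𝕜 : Type*} [Fintype n] [DecidableEq n] [RCLike 𝕜]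

open scoped Norms.Operator in
theorem hasDerivAt_trace_exp_neg_smul_mul (A B : Matrix n n 𝕜) (t : 𝕜) :
    HasDerivAt (fun u : 𝕜 => (NormedSpace.exp ((-u) • A) * B).trace)
      (-(NormedSpace.exp ((-t) • A) * A * B).trace) t := by
  have hexp := ((hasDerivAt_exp_smul_const A (-t)).scomp t (hasDerivAt_neg t)).mul_const B
  have htrace : HasDerivAt (fun u : 𝕜 => (NormedSpace.exp ((-u) • A) * B).trace)
      (((-1 : 𝕜) • (NormedSpace.exp ((-t) • A) * A)) * B).trace t :=
    (traceLinearMap n 𝕜 𝕜).toContinuousLinearMap.hasFDerivAt.comp_hasDerivAt t hexp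
  simpa using htrace

theorem IsHermitian.posDef_exp {A : Matrix n n 𝕜} (hA : A.IsHermitian) :
    (NormedSpace.exp A).PosDef := by
  set B := NormedSpace.exp ((2⁻¹ : ℝ) • A)
  have hB : Bᴴ = B := (hA.smul (IsSelfAdjoint.all _)).exp
  have hsq : NormedSpace.exp A = Bᴴ * B := by
    rw [hB, ← exp_add_of_commute _ _ (Commute.refl _), ← add_smul]
    norm_num
  rw [hsq]
  exact .conjTranspose_mul_self B (mulVec_injective_iff_isUnit.2 (isUnit_exp _))

end Matrix

/-- The thermal fidelity susceptibility
`ξ(β) = -2 lim_{δ→0} ln F(β-δ/2, β+δ/2)/δ²`, where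
`F(β₁,β₂) = Z((β₁+β₂)/2)/√(Z(β₁)Z(β₂))` is the Uhlmann fidelity between commuting Gibbs
states of the Hermitian matrix `H`, equals `C_v(β)/(4β²)` with `C_v(β) = β² Var_ρ(H)`,
where `Var_ρ(H)` is the variance of `H` in the Gibbs state at inverse temperature `β`. -/
theorem thermal_fidelity_susceptibility_eq_specific_heat {d : ℕ}
    (H : Matrix (Fin d) (Fin d) ℝ) (hH : H.IsHermitian)
    (β : ℝ) (hβ : 0 < β)
    (Z : ℝ → ℝ) (hZ : ∀ b, Z b = (NormedSpace.exp ((-b) • H)).trace)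
    (F : ℝ → ℝ → ℝ)
    (hF : ∀ β₁ β₂, F β₁ β₂ = Z ((β₁ + β₂) / 2) / Real.sqrt (Z β₁ * Z β₂))
    (ρ : Matrix (Fin d) (Fin d) ℝ)
    (hρdef : ρ = (Z β)⁻¹ • NormedSpace.exp ((-β) • H))
    (Var Cv : ℝ)
    (hVar : Var = (ρ * H * H).trace - ((ρ * H).trace) ^ 2)
    (hCv : Cv = β ^ 2 * Var) :
    Tendsto (fun δ : ℝ => -2 * Real.log (F (β - δ / 2) (β + δ / 2)) / δ ^ 2)
      (nhdsWithin 0 {(0 : ℝ)}ᶜ) (nhds (Cv / (4 * β ^ 2))) := by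
  rcases isEmpty_or_nonempty (Fin d) with hd | hd
  -- for `d = 0` every trace is `0`, and so are `log (0 / 0)` and both sides
  · simp [hF, hZ, hCv, hVar, Matrix.trace]
  have hpos : ∀ b, 0 < Z b := fun b =>
    hZ b ▸ (hH.smul (IsSelfAdjoint.all (-b))).posDef_exp.trace_pos
  have hZ' : ∀ b, HasDerivAt Z (-(NormedSpace.exp ((-b) • H) * H).trace) b := fun b => by
    rw [funext hZ]
    simpa only [Matrix.mul_one] using hasDerivAt_trace_exp_neg_smul_mul H 1 b
  have hZ'' : HasDerivAt (fun b => -(NormedSpace.exp ((-b) • H) * H).trace)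
      (NormedSpace.exp ((-β) • H) * H * H).trace β := by
    simpa only [neg_neg] using (hasDerivAt_trace_exp_neg_smul_mul H H β).fun_neg
  have hCv' : Cv / (4 * β ^ 2) = ((NormedSpace.exp ((-β) • H) * H * H).trace / Z β -
      (-(NormedSpace.exp ((-β) • H) * H).trace / Z β) ^ 2) / 4 := by
    rw [hCv, hVar, hρdef]
    simp only [Matrix.smul_mul, trace_smul, smul_eq_mul]
    field_simp
  simp_rw [hCv', hF]
  exact tendsto_neg_two_log_fidelity_div_sq hpos hZ' hZ''
end

section
/- For a quantum Ising chain of even size N, the ground-state fidelity susceptibility in the positive-parity sector at the critical point g=1 equals χ₀⁺ = N(N−1)/32, obtained as the limit g→1 of χ₀⁺(g) = (N²/(16g²)) g^N/(g^N+1)² + (N/(16g²)) (g^N − g²)/((g^N+1)(g²−1)). -/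
open Filter

/-- For an even-size quantum Ising chain, the ground-state fidelity susceptibility in the
positive-parity sector at the critical point equals `χ₀⁺ = N(N−1)/32`, obtained as the
limit `g → 1` of Damski's closed-form expression. -/
theorem positive_parity_susceptibility_critical (N : ℕ) (hN : Even N) (hN2 : 2 ≤ N) :
    Tendsto (fun g : ℝ =>
        (N : ℝ) ^ 2 / (16 * g ^ 2) * (g ^ N / (g ^ N + 1) ^ 2) +
          (N : ℝ) / (16 * g ^ 2) * ((g ^ N - g ^ 2) / ((g ^ N + 1) * (g ^ 2 - 1))))
      (nhdsWithin 1 {(1 : ℝ)}ᶜ) (nhds ((N : ℝ) * ((N : ℝ) - 1) / 32)) := by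
  obtain ⟨M, rfl⟩ : ∃ M, N = M + 2 := ⟨N - 2, by omega⟩
  set F : ℝ → ℝ := fun g =>
    (↑(M + 2) : ℝ) ^ 2 / (16 * g ^ 2) * (g ^ (M + 2) / (g ^ (M + 2) + 1) ^ 2) +
      (↑(M + 2) : ℝ) / (16 * g ^ 2) *
        ((g ^ 2 * ∑ i ∈ Finset.range M, g ^ i) / ((g ^ (M + 2) + 1) * (g + 1))) with hF
  have hc : ContinuousAt F 1 := by
    apply ContinuousAt.add
    · exact (ContinuousAt.div (by fun_prop) (by fun_prop) (by norm_num)).mul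
        (ContinuousAt.div (by fun_prop) (by fun_prop) (by positivity))
    · exact (ContinuousAt.div (by fun_prop) (by fun_prop) (by norm_num)).mul
        (ContinuousAt.div (by fun_prop) (by fun_prop) (by positivity))
  have hval : F 1 = (↑(M + 2) : ℝ) * ((↑(M + 2) : ℝ) - 1) / 32 := by
    simp only [hF, one_pow, Finset.sum_const, Finset.card_range, nsmul_eq_mul, mul_one]
    push_cast
    ring
  have hlim : Tendsto F (nhdsWithin 1 {(1 : ℝ)}ᶜ)
      (nhds ((↑(M + 2) : ℝ) * ((↑(M + 2) : ℝ) - 1) / 32)) := by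
    rw [← hval]
    exact hc.tendsto.mono_left nhdsWithin_le_nhds
  refine hlim.congr' ?_
  have hpos : ∀ᶠ g in nhdsWithin 1 {(1 : ℝ)}ᶜ, (0 : ℝ) < g :=
    (eventually_gt_nhds (by norm_num : (0:ℝ) < 1)).filter_mono nhdsWithin_le_nhds
  filter_upwards [self_mem_nhdsWithin, hpos] with g hg hgpos
  have hg1 : g ≠ 1 := hg
  have hgne : g ≠ 0 := ne_of_gt hgpos
  have h1 : g - 1 ≠ 0 := sub_ne_zero.mpr hg1
  have h2 : g + 1 ≠ 0 := by positivity
  have h3 : g ^ (M + 2) + 1 ≠ 0 := by positivity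
  have h4 : g ^ 2 - 1 ≠ 0 := by
    intro h
    have : (g - 1) * (g + 1) = 0 := by linear_combination h
    rcases mul_eq_zero.mp this with h' | h'
    · exact h1 h'
    · exact h2 h'
  have hS : (∑ i ∈ Finset.range M, g ^ i) = (g ^ M - 1) / (g - 1) := geom_sum_eq hg1 M
  simp only [hF, hS]
  field_simp
  ring
end

section
/- The limit as g → 1 of χ₀⁻(g) = −(N²/(16g²)) g^N/(g^N−1)² + (N/(16g²)) (g^N + g²)/((g^N−1)(g²−1)) equals (N² − 3N + 2)/96 for integer N ≥ 2. -/
/-!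
Writing `q(g) = (g^N - 1)/(g - 1)` and clearing denominators,
`χ₀⁻(g) = N / (16 g² q(g)² (g + 1)) · P(g) / (g - 1)³` with
`P = X^{2N} + (1 - N) X^{N+2} + (N - 1) X^N - X²`.
The Taylor coefficients of `X^e` at `1` are the binomial coefficients `C(e, k)`, so those of `P`
vanish for `k < 3`, i.e. `P` has a triple root at `1`, and `P(g)/(g - 1)³` tends to the third one,
`N(N - 1)(N - 2)/3`. Since `q(g) → N`, the limit is `N/(32 N²) · N(N - 1)(N - 2)/3`.
-/

open Filter Topology Polynomial

theorem Polynomial.tendsto_eval_div_sub_pow_taylor_coeff {𝕜 : Type*} [NormedField 𝕜]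
    {p : 𝕜[X]} {a : 𝕜} {n : ℕ} (hp : ∀ k < n, (taylor a p).coeff k = 0) :
    Tendsto (fun x => p.eval x / (x - a) ^ n) (𝓝[≠] a) (𝓝 ((taylor a p).coeff n)) := by
  obtain ⟨q, hq⟩ := X_pow_dvd_iff.mpr hp
  have hq_eval : ∀ x, p.eval x = (x - a) ^ n * q.eval (x - a) := fun x => by
    rw [← taylor_eval_sub a, hq, eval_mul, eval_X_pow]
  have hq_coeff : (taylor a p).coeff n = q.eval (a - a) := by
    rw [hq, coeff_X_pow_mul', if_pos le_rfl, Nat.sub_self, sub_self, coeff_zero_eq_eval_zero]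
  rw [hq_coeff]
  refine Tendsto.congr' ?_ (((q.continuous.comp (continuous_sub_right a)).tendsto a).mono_left
    nhdsWithin_le_nhds)
  filter_upwards [self_mem_nhdsWithin] with x hx
  rw [hq_eval, mul_div_cancel_left₀ _ (pow_ne_zero _ (sub_ne_zero.mpr hx))]
  rfl

theorem tendsto_pow_sub_one_div_sub_one (N : ℕ) :
    Tendsto (fun g : ℝ => (g ^ N - 1) / (g - 1)) (𝓝[≠] 1) (𝓝 N) := by
  have htaylor : taylor 1 (X ^ N - 1 : ℝ[X]) = (X + C 1) ^ N - C 1 := by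
    rw [map_sub, taylor_X_pow, taylor_one]
  have hcoeff :
      ∀ k, (taylor 1 (X ^ N - 1 : ℝ[X])).coeff k = N.choose k - if k = 0 then 1 else 0 := by
    intro k
    rw [htaylor, coeff_sub, coeff_X_add_C_pow, coeff_C, one_pow, one_mul]
  have h := tendsto_eval_div_sub_pow_taylor_coeff (p := X ^ N - 1) (a := (1 : ℝ)) (n := 1)
    (fun k hk => by rw [hcoeff, Nat.lt_one_iff.mp hk]; simp)
  rw [hcoeff] at h
  simpa using h

theorem Nat.cast_choose_three {K : Type*} [Field K] [CharZero K] (n : ℕ) :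
    (n.choose 3 : K) = n * (n - 1) * (n - 2) / 6 := by
  induction n with
  | zero => simp
  | succ n ih => rw [Nat.choose_succ_succ, Nat.cast_add, ih, Nat.cast_choose_two]; push_cast; ring

noncomputable def chiNumerator (N : ℕ) : ℝ[X] :=
  X ^ (2 * N) + C (1 - (N : ℝ)) * X ^ (N + 2) + C ((N : ℝ) - 1) * X ^ N - X ^ 2

theorem taylor_one_chiNumerator_coeff (N k : ℕ) :
    (taylor 1 (chiNumerator N)).coeff k = ((2 * N).choose k : ℝ) +
      (1 - N) * (N + 2).choose k + (N - 1) * N.choose k - (2 : ℕ).choose k := by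
  rw [chiNumerator, map_sub, map_add, map_add, taylor_mul, taylor_mul, taylor_C, taylor_C,
    taylor_X_pow, taylor_X_pow, taylor_X_pow, taylor_X_pow]
  simp only [coeff_add, coeff_sub, coeff_C_mul, coeff_X_add_C_pow, one_pow, one_mul]

theorem taylor_one_chiNumerator_coeff_of_lt_three (N : ℕ) :
    ∀ k < 3, (taylor 1 (chiNumerator N)).coeff k = 0 := by
  intro k hk
  interval_cases k <;> simp only [taylor_one_chiNumerator_coeff, Nat.choose_zero_right,
    Nat.choose_one_right, Nat.cast_choose_two] <;> push_cast <;> ring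

theorem taylor_one_chiNumerator_coeff_three (N : ℕ) :
    (taylor 1 (chiNumerator N)).coeff 3 = N * (N - 1) * (N - 2) / 3 := by
  simp only [taylor_one_chiNumerator_coeff, Nat.cast_choose_three]
  push_cast
  ring

theorem chi_eq_mul_chiNumerator_div {N : ℕ} {g : ℝ} (hg1 : g ≠ 1) (hg_neg : g + 1 ≠ 0)
    (hgN : g ^ N ≠ 1) :
    -((N : ℝ) ^ 2 / (16 * g ^ 2)) * (g ^ N / (g ^ N - 1) ^ 2) +
        (N : ℝ) / (16 * g ^ 2) * ((g ^ N + g ^ 2) / ((g ^ N - 1) * (g ^ 2 - 1))) =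
      N / (16 * g ^ 2 * ((g ^ N - 1) / (g - 1)) ^ 2 * (g + 1)) *
        ((chiNumerator N).eval g / (g - 1) ^ 3) := by
  have h1 : g - 1 ≠ 0 := sub_ne_zero.mpr hg1
  have hN1 : g ^ N - 1 ≠ 0 := sub_ne_zero.mpr hgN
  have h2 : g ^ 2 - 1 = (g - 1) * (g + 1) := by ring
  simp only [chiNumerator, eval_sub, eval_add, eval_mul, eval_C, eval_pow, eval_X]
  rw [h2]
  field_simp
  ring

/-- The limit as `g → 1` of
`χ₀⁻(g) = −(N²/(16g²)) g^N/(g^N−1)² + (N/(16g²)) (g^N + g²)/((g^N−1)(g²−1))`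
equals `(N² − 3N + 2)/96` for integer `N ≥ 2`. -/
theorem negative_parity_susceptibility_critical (N : ℕ) (hN2 : 2 ≤ N) :
    Tendsto (fun g : ℝ =>
        -((N : ℝ) ^ 2 / (16 * g ^ 2)) * (g ^ N / (g ^ N - 1) ^ 2) +
          (N : ℝ) / (16 * g ^ 2) * ((g ^ N + g ^ 2) / ((g ^ N - 1) * (g ^ 2 - 1))))
      (nhdsWithin 1 {(1 : ℝ)}ᶜ) (nhds (((N : ℝ) ^ 2 - 3 * (N : ℝ) + 2) / 96)) := by
  have hN : (N : ℝ) ≠ 0 := Nat.cast_ne_zero.mpr (by omega)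
  have hq := tendsto_pow_sub_one_div_sub_one N
  have hid : Tendsto (fun g : ℝ => g) (𝓝[≠] 1) (𝓝 1) := nhdsWithin_le_nhds
  have hprefactor :
      Tendsto (fun g : ℝ => (N : ℝ) / (16 * g ^ 2 * ((g ^ N - 1) / (g - 1)) ^ 2 * (g + 1)))
        (𝓝[≠] 1) (𝓝 ((N : ℝ) / (16 * 1 ^ 2 * N ^ 2 * (1 + 1)))) :=
    tendsto_const_nhds.div (((tendsto_const_nhds.mul (hid.pow 2)).mul (hq.pow 2)).mul
      (hid.add tendsto_const_nhds)) (by positivity)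
  have hnum := tendsto_eval_div_sub_pow_taylor_coeff (taylor_one_chiNumerator_coeff_of_lt_three N)
  rw [taylor_one_chiNumerator_coeff_three] at hnum
  have hlim : (N : ℝ) / (16 * 1 ^ 2 * N ^ 2 * (1 + 1)) * (N * (N - 1) * (N - 2) / 3) =
      ((N : ℝ) ^ 2 - 3 * N + 2) / 96 := by
    field_simp
    ring
  rw [← hlim]
  refine (hprefactor.mul hnum).congr' ?_
  filter_upwards [self_mem_nhdsWithin, hq.eventually_ne hN,
    nhdsWithin_le_nhds (eventually_ne_nhds (by norm_num : (1 : ℝ) ≠ -1))] with g hg1 hgN hg_neg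
  refine (chi_eq_mul_chiNumerator_div hg1 ?_ ?_).symm
  · rwa [← sub_neg_eq_add, sub_ne_zero]
  · exact sub_ne_zero.mp (div_ne_zero_iff.mp hgN).1
end

section
/- For the transverse-field Ising chain of even size N at the critical point g=1, with k⁺ = {(2j−1)π/N : j=1..N/2} and k⁻ = {2jπ/N : j=1..N/2−1}, the symmetry-breaking gap E₀⁻ − E₀⁺, obtained by evaluating 2∑_{k∈k⁺} 2|sin(k/2)| − 2∑_{k∈k⁻} 2|sin(k/2)| together with the zero-mode energy contributions, equals 2 tan(π/(4N)). -/
open Real Finset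

lemma tele1 (x : ℝ) (m : ℕ) :
    ∑ j ∈ Finset.range m, 2 * Real.sin x * Real.sin ((2 * (j : ℝ) + 1) * x)
      = 1 - Real.cos (2 * (m : ℝ) * x) := by
  have key : ∀ j : ℕ, 2 * Real.sin x * Real.sin ((2 * (j : ℝ) + 1) * x)
      = Real.cos (2 * (j : ℝ) * x) - Real.cos (2 * ((j : ℝ) + 1) * x) := by
    intro j
    rw [Real.cos_sub_cos]
    have h1 : (2 * (j : ℝ) * x + 2 * ((j : ℝ) + 1) * x) / 2 = (2 * (j : ℝ) + 1) * x := by ring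
    have h2 : (2 * (j : ℝ) * x - 2 * ((j : ℝ) + 1) * x) / 2 = -x := by ring
    rw [h1, h2, Real.sin_neg]; ring
  calc ∑ j ∈ Finset.range m, 2 * Real.sin x * Real.sin ((2 * (j : ℝ) + 1) * x)
      = ∑ j ∈ Finset.range m,
          (Real.cos (2 * (j : ℝ) * x) - Real.cos (2 * ((j + 1 : ℕ) : ℝ) * x)) := by
        refine Finset.sum_congr rfl fun j _ => ?_
        rw [key j]; push_cast; ring_nf
    _ = Real.cos (2 * ((0 : ℕ) : ℝ) * x) - Real.cos (2 * ((m : ℕ) : ℝ) * x) :=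
        Finset.sum_range_sub' (fun j => Real.cos (2 * (j : ℝ) * x)) m
    _ = 1 - Real.cos (2 * (m : ℝ) * x) := by norm_num

lemma tele2 (x : ℝ) (n : ℕ) :
    ∑ j ∈ Finset.range n, 2 * Real.sin x * Real.sin (2 * ((j : ℝ) + 1) * x)
      = Real.cos x - Real.cos ((2 * (n : ℝ) + 1) * x) := by
  have key : ∀ j : ℕ, 2 * Real.sin x * Real.sin (2 * ((j : ℝ) + 1) * x)
      = Real.cos ((2 * (j : ℝ) + 1) * x) - Real.cos ((2 * ((j : ℝ) + 1) + 1) * x) := by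
    intro j
    rw [Real.cos_sub_cos]
    have h1 : ((2 * (j : ℝ) + 1) * x + (2 * ((j : ℝ) + 1) + 1) * x) / 2
        = 2 * ((j : ℝ) + 1) * x := by ring
    have h2 : ((2 * (j : ℝ) + 1) * x - (2 * ((j : ℝ) + 1) + 1) * x) / 2 = -x := by ring
    rw [h1, h2, Real.sin_neg]; ring
  calc ∑ j ∈ Finset.range n, 2 * Real.sin x * Real.sin (2 * ((j : ℝ) + 1) * x)
      = ∑ j ∈ Finset.range n,
          (Real.cos ((2 * (j : ℝ) + 1) * x) - Real.cos ((2 * ((j + 1 : ℕ) : ℝ) + 1) * x)) := by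
        refine Finset.sum_congr rfl fun j _ => ?_
        rw [key j]; push_cast; ring_nf
    _ = Real.cos ((2 * ((0 : ℕ) : ℝ) + 1) * x) - Real.cos ((2 * ((n : ℕ) : ℝ) + 1) * x) :=
        Finset.sum_range_sub' (fun j => Real.cos ((2 * (j : ℝ) + 1) * x)) n
    _ = Real.cos x - Real.cos ((2 * (n : ℝ) + 1) * x) := by norm_num

/-- For the transverse-field Ising chain of even size `N`, the symmetry-breaking gap at the
critical point, `Δ = E₀⁻ − E₀⁺` with `E₀⁺ = −2∑_{k∈k⁺} 2 sin(k/2)`,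
`E₀⁻ = −2∑_{k∈k⁻} 2 sin(k/2) − 2`, `k⁺ = {(2j−1)π/N}`, `k⁻ = {2jπ/N}`,
equals `2 tan(π/(4N))`. -/
theorem symmetry_breaking_gap_critical (N : ℕ) (hN : Even N) (hN2 : 2 ≤ N) :
    let E₀p : ℝ := -2 * ∑ j ∈ Finset.range (N / 2), 2 * Real.sin ((2 * (j : ℝ) + 1) * π / (2 * N))
    let E₀m : ℝ := -2 * (∑ j ∈ Finset.range (N / 2 - 1), 2 * Real.sin (((j : ℝ) + 1) * π / N)) - 2
    E₀m - E₀p = 2 * Real.tan (π / (4 * N)) := by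
  intro E₀p E₀m
  obtain ⟨m, hm⟩ := hN
  have hm' : N = 2 * m := by omega
  have hm1 : 1 ≤ m := by omega
  subst hm'
  have hNpos : (0 : ℝ) < (2 * m : ℕ) := by positivity
  set x : ℝ := π / (2 * (2 * m : ℕ)) with hx
  have hxpos : 0 < x := by positivity
  have hxlt : x ≤ π / 4 := by
    rw [hx]
    have hm1' : (1:ℝ) ≤ (m:ℝ) := by exact_mod_cast hm1
    apply div_le_div_of_nonneg_left Real.pi_pos.le (by norm_num)
    push_cast; nlinarith
  have hsinx : Real.sin x > 0 := by
    apply Real.sin_pos_of_pos_of_lt_pi hxpos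
    linarith [Real.pi_pos, hxlt]
  -- rewrite the sums
  have hdiv : (2 * m) / 2 = m := by omega
  have hS1 : ∑ j ∈ Finset.range ((2 * m) / 2), 2 * Real.sin ((2 * (j : ℝ) + 1) * π / (2 * (2 * m : ℕ)))
      * Real.sin x = (1 - Real.cos (2 * (m : ℝ) * x)) := by
    rw [hdiv, ← tele1 x m]
    refine Finset.sum_congr rfl fun j _ => ?_
    have : (2 * (j : ℝ) + 1) * π / (2 * (2 * m : ℕ)) = (2 * (j : ℝ) + 1) * x := by
      rw [hx]; ring
    rw [this]; ring
  have hS2 : ∑ j ∈ Finset.range ((2 * m) / 2 - 1), 2 * Real.sin (((j : ℝ) + 1) * π / (2 * m : ℕ))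
      * Real.sin x = (Real.cos x - Real.cos ((2 * ((m - 1 : ℕ) : ℝ) + 1) * x)) := by
    rw [hdiv, ← tele2 x (m - 1)]
    refine Finset.sum_congr rfl fun j _ => ?_
    have : ((j : ℝ) + 1) * π / (2 * m : ℕ) = 2 * ((j : ℝ) + 1) * x := by
      rw [hx]; push_cast; field_simp
    rw [this]; ring
  -- values of the boundary cosines
  have h2mx : 2 * (m : ℝ) * x = π / 2 := by
    rw [hx]; push_cast; field_simp
  have hm1x : (2 * ((m - 1 : ℕ) : ℝ) + 1) * x = π / 2 - x := by
    have : ((m - 1 : ℕ) : ℝ) = (m : ℝ) - 1 := by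
      push_cast [Nat.cast_sub hm1]; ring
    rw [this, hx]; push_cast; field_simp; ring
  have hcos1 : Real.cos (2 * (m : ℝ) * x) = 0 := by rw [h2mx, Real.cos_pi_div_two]
  have hcos2 : Real.cos ((2 * ((m - 1 : ℕ) : ℝ) + 1) * x) = Real.sin x := by
    rw [hm1x, Real.cos_pi_div_two_sub]
  rw [hcos1] at hS1
  rw [hcos2] at hS2
  -- the tangent
  have hhalf : π / (4 * ((2 * m : ℕ) : ℝ)) = x / 2 := by rw [hx]; ring
  have hcoshalf : Real.cos (x / 2) > 0 := by
    apply Real.cos_pos_of_mem_Ioo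
    constructor <;> [linarith [Real.pi_pos]; linarith [Real.pi_pos, hxlt]]
  have htan : 2 * Real.tan (x / 2) * Real.sin x = 2 * (1 - Real.cos x) := by
    rw [Real.tan_eq_sin_div_cos]
    have hsx : Real.sin x = 2 * Real.sin (x / 2) * Real.cos (x / 2) := by
      rw [← Real.sin_two_mul]; congr 1; ring
    have hcx : Real.cos x = 1 - 2 * Real.sin (x / 2) ^ 2 := by
      have h := Real.cos_two_mul (x / 2)
      have h2 := Real.sin_sq_add_cos_sq (x / 2)
      have hx2 : 2 * (x / 2) = x := by ring
      rw [hx2] at h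
      nlinarith
    rw [hsx, hcx]
    field_simp
    ring
  -- finish
  have key : (E₀m - E₀p - 2 * Real.tan (π / (4 * ((2 * m : ℕ) : ℝ)))) * Real.sin x = 0 := by
    show (E₀m - E₀p - 2 * Real.tan (π / (4 * ((2 * m : ℕ) : ℝ)))) * Real.sin x = 0
    simp only [E₀p, E₀m]
    rw [hhalf]
    have expand : ∀ (a b t : ℝ), (-2 * b - 2 - -2 * a - 2 * t) * Real.sin x
        = 2 * (a * Real.sin x) - 2 * (b * Real.sin x) - 2 * Real.sin x
          - 2 * t * Real.sin x := by intros; ring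
    rw [expand]
    rw [← Finset.sum_mul] at hS1 hS2
    rw [hS1, hS2, htan]
    ring
  have hne : Real.sin x ≠ 0 := ne_of_gt hsinx
  have := mul_eq_zero.mp key
  rcases this with h | h
  · linarith
  · exact absurd h hne
end

section
/- For the transverse-field Ising model, the derivative of the symmetry-breaking gap Δ(g) = E₀⁻(g) − E₀⁺(g) at the critical point g = 1 satisfies Δ'(1) = Δ(1)/2 + 1 = tan(π/(4N)) + 1; in particular lim_{N→∞} Δ'(1) = 1 > 0. -/
open Real Finset Filter

/-!
At `g = 1` the mode energy `ε_k(g) = √((g - cos k)² + sin² k)` equals `2 sin (k / 2)` and has slope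
`(1 - cos k) / ε_k(1) = sin (k / 2) = ε_k(1) / 2`, so differentiating term by term gives
`Δ'(1) = Δ(1) / 2 + 1`, the `+ 1` coming from the constant `-2` in `E₀⁻`. With `θ = π / (2N)` the
two sums in `Δ(1)` telescope (`2 sin θ sin x = cos (x - θ) - cos (x + θ)`) to `1 / sin θ` and
`(cos θ - sin θ) / sin θ`, whence `Δ(1) = 2 (1 - cos θ) / sin θ = 2 tan (θ / 2)`.
-/

noncomputable def modeEnergy (g k : ℝ) : ℝ := √((g - cos k) ^ 2 + sin k ^ 2)

lemma one_sub_cos_sq_add_sin_sq (k : ℝ) : (1 - cos k) ^ 2 + sin k ^ 2 = 2 * (1 - cos k) := by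
  linear_combination sin_sq_add_cos_sq k

lemma modeEnergy_one (k : ℝ) : modeEnergy 1 k = 2 * |sin (k / 2)| := by
  have hcos : cos k = 1 - 2 * sin (k / 2) ^ 2 := by
    rw [← cos_two_mul_eq_one_sub, mul_div_cancel₀ k two_ne_zero]
  rw [modeEnergy, one_sub_cos_sq_add_sin_sq, hcos,
    show 2 * (1 - (1 - 2 * sin (k / 2) ^ 2)) = (2 * sin (k / 2)) ^ 2 by ring,
    sqrt_sq_eq_abs, abs_mul, abs_two]

lemma hasDerivAt_modeEnergy_one {k : ℝ} (hk : cos k ≠ 1) :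
    HasDerivAt (modeEnergy · k) (modeEnergy 1 k / 2) 1 := by
  have hq : (1 - cos k) ^ 2 + sin k ^ 2 ≠ 0 := by
    rw [one_sub_cos_sq_add_sin_sq]
    exact mul_ne_zero two_ne_zero (sub_ne_zero.2 hk.symm)
  have hsq : HasDerivAt (fun g => (g - cos k) ^ 2 + sin k ^ 2) (2 * (1 - cos k)) 1 := by
    simpa using (((hasDerivAt_id (1 : ℝ)).sub_const (cos k)).pow 2).add_const (sin k ^ 2)
  refine (hsq.sqrt hq).congr_deriv ?_
  have hs : √((1 - cos k) ^ 2 + sin k ^ 2) ≠ 0 := by positivity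
  rw [modeEnergy, ← one_sub_cos_sq_add_sin_sq]
  field_simp
  rw [sq_sqrt (by positivity)]

lemma hasDerivAt_sum_modeEnergy_one {ι : Type*} {s : Finset ι} {k : ι → ℝ}
    (hk : ∀ i ∈ s, cos (k i) ≠ 1) :
    HasDerivAt (fun g => ∑ i ∈ s, modeEnergy g (k i)) ((∑ i ∈ s, modeEnergy 1 (k i)) / 2) 1 := by
  rw [sum_div]
  exact HasDerivAt.fun_sum fun i hi => hasDerivAt_modeEnergy_one (hk i hi)

lemma two_mul_sin_mul_sum_range_sin (θ φ : ℝ) (n : ℕ) :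
    2 * sin θ * ∑ j ∈ range n, sin (φ + 2 * j * θ) = cos (φ - θ) - cos (φ + (2 * n - 1) * θ) := by
  induction n with
  | zero => push_cast; ring_nf
  | succ n ih =>
    have hsym : cos (θ - (φ + 2 * n * θ)) = cos (φ + (2 * n - 1) * θ) := by
      rw [← cos_neg]; ring_nf
    rw [sum_range_succ, mul_add, ih, two_mul_sin_mul_sin, hsym]
    push_cast
    ring_nf

lemma tan_half_eq_one_sub_cos_div_sin (x : ℝ) : tan (x / 2) = (1 - cos x) / sin x := by
  have hx : x = 2 * (x / 2) := by ring
  rw [tan_eq_sin_div_cos]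
  conv_rhs => rw [hx, sin_two_mul, cos_two_mul, ← sin_sq_add_cos_sq (x / 2)]
  rcases eq_or_ne (sin (x / 2)) 0 with hs | hs
  · simp [hs]
  rcases eq_or_ne (cos (x / 2)) 0 with hc | hc
  · simp [hc]
  field_simp
  ring

lemma cos_ne_one_of_mem_Ioo {k : ℝ} (hk : k ∈ Set.Ioo 0 (2 * π)) : cos k ≠ 1 := by
  rw [Ne, cos_eq_one_iff_of_lt_of_lt (by linarith [hk.1, pi_pos]) hk.2]
  exact hk.1.ne'

lemma modeEnergy_one_of_mem_Ioo {k : ℝ} (hk : k ∈ Set.Ioo 0 (2 * π)) :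
    modeEnergy 1 k = 2 * sin (k / 2) := by
  have hsin : 0 < sin (k / 2) := sin_pos_of_pos_of_lt_pi (by linarith [hk.1]) (by linarith [hk.2])
  rw [modeEnergy_one, abs_of_pos hsin]

lemma mul_pi_div_mem_Ioo {x y : ℝ} (hx : 0 < x) (hxy : x < 2 * y) :
    x * π / y ∈ Set.Ioo 0 (2 * π) := by
  have hy : 0 < y := by linarith
  refine ⟨by positivity, ?_⟩
  rw [div_lt_iff₀ hy]
  nlinarith [pi_pos]

lemma sum_modeEnergy_one_odd_mul_sin {N : ℕ} (hN : Even N) (hN0 : 0 < N) :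
    (∑ j ∈ range (N / 2), modeEnergy 1 ((2 * (j : ℝ) + 1) * π / N)) * sin (π / (2 * N)) = 1 := by
  have hNn : (N : ℝ) = 2 * (N / 2 : ℕ) := by exact_mod_cast (Nat.two_mul_div_two_of_even hN).symm
  set n := N / 2
  set θ := π / (2 * N)
  have hN0' : (0 : ℝ) < N := by exact_mod_cast hN0
  have hterm : ∀ j ∈ range n,
      modeEnergy 1 ((2 * (j : ℝ) + 1) * π / N) = 2 * sin (θ + 2 * j * θ) := by
    intro j hj
    have hj : (2 * j + 1 : ℝ) < N := by
      rw [hNn]; exact_mod_cast (show 2 * j + 1 < 2 * n by simp only [mem_range] at hj; omega)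
    rw [modeEnergy_one_of_mem_Ioo (mul_pi_div_mem_Ioo (by positivity) (by linarith))]
    congr 2
    simp only [θ]
    field_simp
    ring
  have htel := two_mul_sin_mul_sum_range_sin θ θ n
  rw [sub_self, cos_zero, show θ + (2 * n - 1) * θ = π / 2 by simp only [θ]; field_simp; linarith,
    cos_pi_div_two] at htel
  rw [sum_congr rfl hterm, ← mul_sum]
  linarith

lemma sum_modeEnergy_one_even_mul_sin {N : ℕ} (hN : Even N) (hN0 : 0 < N) :
    (∑ j ∈ range (N / 2 - 1), modeEnergy 1 (2 * ((j : ℝ) + 1) * π / N)) * sin (π / (2 * N)) =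
      cos (π / (2 * N)) - sin (π / (2 * N)) := by
  have hNn : (N : ℝ) = 2 * (N / 2 : ℕ) := by exact_mod_cast (Nat.two_mul_div_two_of_even hN).symm
  have hn : ((N / 2 - 1 : ℕ) : ℝ) = (N / 2 : ℕ) - 1 := by
    rw [Nat.cast_sub (by have := Nat.two_mul_div_two_of_even hN; omega), Nat.cast_one]
  set n := N / 2
  set θ := π / (2 * N)
  have hN0' : (0 : ℝ) < N := by exact_mod_cast hN0
  have hterm : ∀ j ∈ range (n - 1),
      modeEnergy 1 (2 * ((j : ℝ) + 1) * π / N) = 2 * sin (2 * θ + 2 * j * θ) := by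
    intro j hj
    have hj : (2 * (j + 1) : ℝ) < N := by
      rw [hNn]; exact_mod_cast (show 2 * (j + 1) < 2 * n by simp only [mem_range] at hj; omega)
    rw [modeEnergy_one_of_mem_Ioo (mul_pi_div_mem_Ioo (by positivity) (by linarith))]
    congr 2
    simp only [θ]
    field_simp
    ring
  have htel := two_mul_sin_mul_sum_range_sin θ (2 * θ) (n - 1)
  rw [show 2 * θ - θ = θ by ring, hn,
    show 2 * θ + (2 * (n - 1 : ℝ) - 1) * θ = π / 2 - θ by simp only [θ]; field_simp; linarith,
    cos_pi_div_two_sub] at htel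
  rw [sum_congr rfl hterm, ← mul_sum]
  linarith

lemma sum_modeEnergy_one_odd_sub_even {N : ℕ} (hN : Even N) (hN0 : 0 < N) :
    ∑ j ∈ range (N / 2), modeEnergy 1 ((2 * (j : ℝ) + 1) * π / N) -
      ∑ j ∈ range (N / 2 - 1), modeEnergy 1 (2 * ((j : ℝ) + 1) * π / N) =
      tan (π / (4 * N)) + 1 := by
  have hsin : 0 < sin (π / (2 * N)) := by
    have hN1 : (1 : ℝ) ≤ N := by exact_mod_cast hN0
    apply sin_pos_of_pos_of_lt_pi (by positivity)
    rw [div_lt_iff₀ (by positivity)]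
    nlinarith [pi_pos]
  rw [show π / (4 * N) = π / (2 * N) / 2 by ring, tan_half_eq_one_sub_cos_div_sin,
    div_add_one hsin.ne', eq_div_iff hsin.ne', sub_mul, sum_modeEnergy_one_odd_mul_sin hN hN0,
    sum_modeEnergy_one_even_mul_sin hN hN0]
  ring

lemma tendsto_tan_pi_div_four_mul_atTop :
    Tendsto (fun M : ℕ => tan (π / (4 * M))) atTop (nhds 0) := by
  have hangle : Tendsto (fun M : ℕ => π / (4 * (M : ℝ))) atTop (nhds 0) :=
    tendsto_const_nhds.div_atTop (tendsto_natCast_atTop_atTop.const_mul_atTop four_pos)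
  simpa [Function.comp_def] using (continuousAt_tan.2 (by simp)).tendsto.comp hangle

/-- For the transverse-field Ising chain of even size `N`, the derivative of the
symmetry-breaking gap `Δ(g) = E₀⁻(g) − E₀⁺(g)` at the critical point `g = 1` satisfies
`Δ'(1) = Δ(1)/2 + 1 = tan(π/(4N)) + 1`; in particular `Δ'(1) → 1` as `N → ∞`. -/
theorem gap_derivative_at_critical (N : ℕ) (hN : Even N) (hN2 : 2 ≤ N) :
    let E₀p : ℝ → ℝ := fun g =>
      -2 * ∑ j ∈ Finset.range (N / 2),
        Real.sqrt ((g - Real.cos ((2 * (j : ℝ) + 1) * π / N)) ^ 2 +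
          (Real.sin ((2 * (j : ℝ) + 1) * π / N)) ^ 2)
    let E₀m : ℝ → ℝ := fun g =>
      -2 * (∑ j ∈ Finset.range (N / 2 - 1),
        Real.sqrt ((g - Real.cos (2 * ((j : ℝ) + 1) * π / N)) ^ 2 +
          (Real.sin (2 * ((j : ℝ) + 1) * π / N)) ^ 2)) - 2
    let Δ : ℝ → ℝ := fun g => E₀m g - E₀p g
    deriv Δ 1 = Δ 1 / 2 + 1 ∧
    deriv Δ 1 = Real.tan (π / (4 * N)) + 1 ∧
    Tendsto (fun M : ℕ => Real.tan (π / (4 * M)) + 1) atTop (nhds 1) := by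
  intro E₀p E₀m Δ
  have hN0 : 0 < N := by omega
  have hcos : ∀ x : ℝ, 0 < x → x < N → cos (x * π / N) ≠ 1 := fun x hx hxN =>
    cos_ne_one_of_mem_Ioo (mul_pi_div_mem_Ioo hx (by linarith))
  have hDp : HasDerivAt E₀p (-2 * ((∑ j ∈ range (N / 2),
      modeEnergy 1 ((2 * (j : ℝ) + 1) * π / N)) / 2)) 1 :=
    (hasDerivAt_sum_modeEnergy_one fun j hj => hcos _ (by positivity) (by
      have : 2 * j + 1 < N := by simp only [mem_range] at hj; omega
      exact_mod_cast this)).const_mul (-2)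
  have hDm : HasDerivAt E₀m (-2 * ((∑ j ∈ range (N / 2 - 1),
      modeEnergy 1 (2 * ((j : ℝ) + 1) * π / N)) / 2)) 1 :=
    ((hasDerivAt_sum_modeEnergy_one fun j hj => hcos _ (by positivity) (by
      have : 2 * (j + 1) < N := by simp only [mem_range] at hj; omega
      exact_mod_cast this)).const_mul (-2)).sub_const 2
  have hDΔ : HasDerivAt Δ _ 1 := hDm.sub hDp
  have hΔ1 : Δ 1 = 2 * (∑ j ∈ range (N / 2), modeEnergy 1 ((2 * (j : ℝ) + 1) * π / N) -
      ∑ j ∈ range (N / 2 - 1), modeEnergy 1 (2 * ((j : ℝ) + 1) * π / N)) - 2 := by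
    simp only [Δ, E₀m, E₀p, modeEnergy]
    ring
  have hderiv : deriv Δ 1 = Δ 1 / 2 + 1 := by
    rw [hDΔ.deriv, hΔ1]
    ring
  refine ⟨hderiv, ?_, by simpa using tendsto_tan_pi_div_four_mul_atTop.add_const 1⟩
  rw [hderiv, hΔ1, sum_modeEnergy_one_odd_sub_even hN hN0]
  ring
end
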